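/- arXiv:2106.01285 — 2 statements merged into one kernel-verified Lean document; each statement's English description precedes it below -/
import Mathlib

section
/- The Tsallis-regularized objective f attains its maximum over the probability simplex Δ^{m−1} at the unique point z* given componentwise by z*_a = g_a^{1/p} / Σ_b g_b^{1/p}; i.e., z* ∈ Δ^{m−1}, f(z) < f(z*) for every z ∈ Δ^{m−1} with z ≠ z*. -/
/-!
With `s = (Σ_b g_b^(1/p))^p` the best response satisfies `g_a = s · z*_a^p`, so the gap
`f(z*) - f(z)` equals `s/(p+1)` times the sum over `a` of the Bregman divergences of the
strictly convex function `t ↦ t^(p+1)` between `z_a` and `z*_a`. Each divergence is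
nonnegative by Bernoulli's inequality and positive where `z_a ≠ z*_a`.
-/

/-- The Tsallis-regularized objective
`f(z) = ⟨z, g⟩ + (s/(p+1))(1 − Σ_a z_a^(p+1))` with `s = (Σ_a g_a^(1/p))^p`. -/
noncomputable def tsallisObj (m : ℕ) (g : Fin m → ℝ) (p : ℝ)
    (z : Fin m → ℝ) : ℝ :=
  (∑ a, z a * g a) +
    ((∑ a, g a ^ (1 / p)) ^ p / (p + 1)) * (1 - ∑ a, z a ^ (p + 1))

/-- The Tsallis best response `z*_a = g_a^(1/p) / Σ_b g_b^(1/p)`. -/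
noncomputable def tsallisBR (m : ℕ) (g : Fin m → ℝ) (p : ℝ) : Fin m → ℝ :=
  fun a => g a ^ (1 / p) / ∑ b, g b ^ (1 / p)

noncomputable def rpowBregman (q c t : ℝ) : ℝ :=
  t ^ q - c ^ q - q * c ^ (q - 1) * (t - c)

section

variable {q c t : ℝ}

theorem rpowBregman_pos (hq : 1 < q) (hc : 0 < c) (ht : 0 ≤ t) (htc : t ≠ c) :
    0 < rpowBregman q c t := by
  have hs : -1 ≤ t / c - 1 := by have := div_nonneg ht hc.le; linarith
  have hs' : t / c - 1 ≠ 0 := by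
    rw [sub_ne_zero, Ne, div_eq_one_iff_eq hc.ne']; exact htc
  -- Bernoulli's inequality at `t / c`, rescaled by `c ^ q`
  have bernoulli := one_add_mul_self_lt_rpow_one_add hs hs' hq
  rw [add_sub_cancel, Real.div_rpow ht hc.le, lt_div_iff₀ (Real.rpow_pos_of_pos hc q)] at bernoulli
  have tangent : c ^ q + q * c ^ (q - 1) * (t - c) = (1 + q * (t / c - 1)) * c ^ q := by
    rw [Real.rpow_sub_one hc.ne']; field_simp
  rw [rpowBregman]
  linarith

theorem rpowBregman_nonneg (hq : 1 < q) (hc : 0 < c) (ht : 0 ≤ t) : 0 ≤ rpowBregman q c t := by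
  rcases eq_or_ne t c with rfl | htc
  · simp [rpowBregman]
  · exact (rpowBregman_pos hq hc ht htc).le

end

section

variable {m : ℕ} {g : Fin m → ℝ} {p : ℝ}

theorem sum_rpow_one_div_pos (hg : ∀ a, 0 < g a) (a : Fin m) :
    0 < ∑ b, g b ^ (1 / p) :=
  Finset.sum_pos (fun b _ => Real.rpow_pos_of_pos (hg b) _) ⟨a, Finset.mem_univ a⟩

theorem tsallisBR_pos (hg : ∀ a, 0 < g a) (a : Fin m) : 0 < tsallisBR m g p a :=
  div_pos (Real.rpow_pos_of_pos (hg a) _) (sum_rpow_one_div_pos hg a)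

theorem tsallisBR_mem_stdSimplex (hm : 1 ≤ m) (hg : ∀ a, 0 < g a) :
    tsallisBR m g p ∈ stdSimplex ℝ (Fin m) := by
  refine ⟨fun a => (tsallisBR_pos hg a).le, ?_⟩
  simp only [tsallisBR]
  rw [← Finset.sum_div, div_self (sum_rpow_one_div_pos hg ⟨0, hm⟩).ne']

theorem sum_rpow_one_div_rpow_mul_tsallisBR_rpow (hg : ∀ a, 0 < g a) (hp : p ≠ 0) (a : Fin m) :
    (∑ b, g b ^ (1 / p)) ^ p * tsallisBR m g p a ^ p = g a := by
  have hS := sum_rpow_one_div_pos (p := p) hg a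
  rw [tsallisBR, Real.div_rpow (Real.rpow_nonneg (hg a).le _) hS.le,
    ← Real.rpow_mul (hg a).le, one_div_mul_cancel hp, Real.rpow_one,
    mul_div_cancel₀ _ (Real.rpow_pos_of_pos hS p).ne']

theorem tsallisObj_sub_eq_sum_rpowBregman (w z : Fin m → ℝ) (hp : p + 1 ≠ 0)
    (hw : ∀ a, (∑ b, g b ^ (1 / p)) ^ p * w a ^ p = g a) :
    tsallisObj m g p w - tsallisObj m g p z =
      (∑ b, g b ^ (1 / p)) ^ p / (p + 1) * ∑ a, rpowBregman (p + 1) (w a) (z a) := by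
  unfold tsallisObj
  -- `s` mentions `g`, so it is made opaque before `g a` is rewritten by `hw`
  generalize (∑ b, g b ^ (1 / p)) ^ p = s at hw ⊢
  calc _ = ∑ a, ((w a - z a) * g a + s / (p + 1) * (z a ^ (p + 1) - w a ^ (p + 1))) := by
        simp only [Finset.sum_add_distrib, Finset.sum_sub_distrib, sub_mul, ← Finset.mul_sum]
        ring
    _ = _ := by
        rw [Finset.mul_sum]
        refine Finset.sum_congr rfl fun a _ => ?_
        rw [rpowBregman, add_sub_cancel_right, ← hw a]
        field_simp
        ring

end

/-- the Tsallis-regularized objective attains its maximum over the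
probability simplex at the unique point `z*`. -/
theorem tsallisBR_unique_max (m : ℕ) (hm : 1 ≤ m) (g : Fin m → ℝ)
    (hg : ∀ a, 0 < g a) (p : ℝ) (hp : p ∈ Set.Ioc (0 : ℝ) 1) :
    tsallisBR m g p ∈ stdSimplex ℝ (Fin m) ∧
    ∀ z ∈ stdSimplex ℝ (Fin m), z ≠ tsallisBR m g p →
      tsallisObj m g p z < tsallisObj m g p (tsallisBR m g p) := by
  have hp0 : 0 < p := hp.1
  refine ⟨tsallisBR_mem_stdSimplex hm hg, fun z hz hne => ?_⟩
  obtain ⟨a, ha⟩ := Function.ne_iff.1 hne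
  have hS := sum_rpow_one_div_pos (p := p) hg a
  have hq : 1 < p + 1 := by linarith
  rw [← sub_pos, tsallisObj_sub_eq_sum_rpowBregman _ _ (by linarith)
    (sum_rpow_one_div_rpow_mul_tsallisBR_rpow hg hp0.ne')]
  refine mul_pos (by positivity) (Finset.sum_pos' (fun b _ => ?_) ⟨a, Finset.mem_univ a, ?_⟩)
  · exact rpowBregman_nonneg hq (tsallisBR_pos hg b) (hz.1 b)
  · exact rpowBregman_pos hq (tsallisBR_pos hg a) (hz.1 a) ha
end

section
/- For every x in the probability simplex Δ^{m−1} and every g ∈ ℝ^m, the Euclidean projections Π_Δ(x + η g) converge as η → ∞ to a point z ∈ Δ^{m−1} that is supported on the argmax coordinates of g and maximizes the linear objective over the simplex: ⟨z, g⟩ = max_{z' ∈ Δ^{m−1}} ⟨z', g⟩ = max_a g_a; in particular, the limit of the projected infinite-step-size gradient ascent update is a best response to g. -/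
open Filter Finset
open scoped RealInnerProductSpace

/-!
Let `A` be the set of maximizers of `g` and `z` the projection of `x` onto the face of the simplex
spanned by `A`: `z a = (x a - c)⁺` on `A` and `0` off `A`, the water level `c` being fixed by
`∑ z = 1`. With `τ = c + η max g`, the slack `x + η g - z` equals `τ` on the support of `z` and is
at most `τ` everywhere as soon as `η (max g - g a) ≥ x a - c` for every `a ∉ A`. These are the KKT
conditions for the projection onto the simplex, so `Π_Δ(x + η g) = z` for all large `η`; being
supported on `A`, `z` is a best response to `g`.
-/

theorem eq_of_real_inner_sub_sub_nonpos_of_norm_sub_le {E : Type*} [NormedAddCommGroup E]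
    [InnerProductSpace ℝ E] {v z w : E} (hz : ⟪v - z, w - z⟫ ≤ 0) (hw : ‖v - w‖ ≤ ‖v - z‖) :
    w = z := by
  have hexpand : ‖v - w‖ ^ 2 = ‖v - z‖ ^ 2 - 2 * ⟪v - z, w - z⟫ + ‖w - z‖ ^ 2 := by
    rw [← norm_sub_sq_real, sub_sub_sub_cancel_right]
  have hwz : ‖w - z‖ ^ 2 ≤ 0 := by nlinarith [pow_le_pow_left₀ (norm_nonneg _) hw 2]
  rw [← sub_eq_zero, ← norm_eq_zero]
  exact pow_eq_zero_iff two_ne_zero |>.mp (le_antisymm hwz (sq_nonneg _))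

variable {ι : Type*}

theorem exists_sum_max_sub_eq {s : Finset ι} (hs : s.Nonempty) (x : ι → ℝ) {t : ℝ}
    (ht : 0 ≤ t) : ∃ c, ∑ a ∈ s, max (x a - c) 0 = t := by
  set f : ℝ → ℝ := fun c => ∑ a ∈ s, max (x a - c) 0
  have hf : Continuous f := by fun_prop
  obtain ⟨b, hb, hxb⟩ := s.exists_max_image x hs
  have hfb : f (x b) = 0 := sum_eq_zero fun a ha => max_eq_right (by linarith [hxb a ha])
  have hft : t ≤ f (x b - t) :=
    calc t = max (x b - (x b - t)) 0 := by simp [ht]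
      _ ≤ f (x b - t) := single_le_sum (f := fun a => max (x a - (x b - t)) 0)
            (fun _ _ => le_max_right _ _) hb
  exact intermediate_value_univ (x b) (x b - t) hf ⟨hfb ▸ ht, hft⟩

section WaterFill

variable [DecidableEq ι]

/-- For the water level `c` making the coordinates sum to `1`, this is the Euclidean projection of
`x` onto the face of the simplex spanned by `s`. -/
noncomputable def waterFill (s : Finset ι) (x : EuclideanSpace ℝ ι) (c : ℝ) :
    EuclideanSpace ℝ ι :=
  WithLp.toLp 2 fun a => if a ∈ s then max (x a - c) 0 else 0

theorem waterFill_apply (s : Finset ι) (x : EuclideanSpace ℝ ι) (c : ℝ) (a : ι) :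
    waterFill s x c a = if a ∈ s then max (x a - c) 0 else 0 :=
  rfl

theorem waterFill_nonneg (s : Finset ι) (x : EuclideanSpace ℝ ι) (c : ℝ) (a : ι) :
    0 ≤ waterFill s x c a := by
  rw [waterFill_apply]
  split_ifs
  exacts [le_max_right _ _, le_rfl]

theorem mem_of_waterFill_ne_zero {s : Finset ι} {x : EuclideanSpace ℝ ι} {c : ℝ} {a : ι}
    (ha : waterFill s x c a ≠ 0) : a ∈ s := by
  by_contra has
  exact ha (if_neg has)

end WaterFill

variable [Fintype ι]

theorem sum_mul_le_of_mem_stdSimplex {w g : ι → ℝ} {M : ℝ} (hw : w ∈ stdSimplex ℝ ι)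
    (hg : ∀ a, g a ≤ M) : ∑ a, w a * g a ≤ M :=
  calc ∑ a, w a * g a ≤ ∑ a, w a * M :=
        sum_le_sum fun a _ => mul_le_mul_of_nonneg_left (hg a) (hw.1 a)
    _ = M := by rw [← sum_mul, hw.2, one_mul]

theorem sum_mul_eq_of_support {z g : ι → ℝ} {M : ℝ} (hz : ∑ a, z a = 1)
    (hsupp : ∀ a, z a ≠ 0 → g a = M) : ∑ a, z a * g a = M :=
  calc ∑ a, z a * g a = ∑ a, z a * M := sum_congr rfl fun a _ => by
        by_cases ha : z a = 0
        · simp [ha]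
        · rw [hsupp a ha]
    _ = M := by rw [← sum_mul, hz, one_mul]

/-- KKT conditions for `z` to be the Euclidean projection of `v` onto the simplex. -/
theorem real_inner_sub_sub_nonpos_of_sub_le {v z w : EuclideanSpace ℝ ι} (τ : ℝ)
    (hle : ∀ a, v a - z a ≤ τ) (heq : ∀ a, z a ≠ 0 → v a - z a = τ) (hw : ∀ a, 0 ≤ w a)
    (hsum : ∑ a, w a = ∑ a, z a) : ⟪v - z, w - z⟫ ≤ 0 := by
  have hτ : ∑ a, τ * (w a - z a) = 0 := by
    rw [← mul_sum, sum_sub_distrib, hsum, sub_self, mul_zero]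
  calc ⟪v - z, w - z⟫ = ∑ a, (v a - z a - τ) * (w a - z a) + ∑ a, τ * (w a - z a) := by
        simp only [PiLp.inner_apply, PiLp.sub_apply, RCLike.inner_apply, conj_trivial,
          ← sum_add_distrib]
        exact sum_congr rfl fun a _ => by ring
    _ ≤ 0 := by
      rw [hτ, add_zero]
      refine sum_nonpos fun a _ => ?_
      by_cases hz : z a = 0
      · simp only [hz, sub_zero]
        exact mul_nonpos_of_nonpos_of_nonneg (by linarith [hle a]) (hw a)
      · rw [heq a hz, sub_self, zero_mul]

variable [DecidableEq ι]

theorem sum_waterFill (s : Finset ι) (x : EuclideanSpace ℝ ι) (c : ℝ) :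
    ∑ a, waterFill s x c a = ∑ a ∈ s, max (x a - c) 0 := by
  simp only [waterFill_apply, sum_ite_mem, univ_inter]

theorem eventually_real_inner_sub_waterFill_nonpos (x g : EuclideanSpace ℝ ι) (c M : ℝ)
    {s : Finset ι} (hs : ∀ a ∈ s, g a = M) (hsc : ∀ a ∉ s, g a < M) :
    ∀ᶠ η : ℝ in atTop, ∀ w : EuclideanSpace ℝ ι, (∀ a, 0 ≤ w a) →
      ∑ a, w a = ∑ a, waterFill s x c a →
      ⟪x + η • g - waterFill s x c, w - waterFill s x c⟫ ≤ 0 := by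
  have hlarge : ∀ᶠ η : ℝ in atTop, ∀ a ∉ s, x a - c ≤ η * (M - g a) := by
    refine eventually_all.2 fun a => eventually_imp_distrib_left.2 fun ha => ?_
    exact (tendsto_id.atTop_mul_const (sub_pos.2 (hsc a ha))).eventually_ge_atTop _
  filter_upwards [hlarge] with η hη w hw hsum
  refine real_inner_sub_sub_nonpos_of_sub_le (c + η * M) (fun a => ?_) (fun a ha => ?_) hw hsum
  · simp only [PiLp.add_apply, PiLp.smul_apply, smul_eq_mul, waterFill_apply]
    split_ifs with has
    · rw [hs a has]
      linarith [le_max_left (x a - c) 0]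
    · linarith [hη a has]
  · have has := mem_of_waterFill_ne_zero ha
    rw [waterFill_apply, if_pos has] at ha
    have hxc : 0 ≤ x a - c := not_lt.1 fun h => ha (max_eq_right h.le)
    simp only [PiLp.add_apply, PiLp.smul_apply, smul_eq_mul, waterFill_apply, if_pos has,
      max_eq_left hxc, hs a has]
    ring

theorem proj_simplex_tendsto_bestResponse_general (m : ℕ) (hm : 1 ≤ m)
    (x g : EuclideanSpace ℝ (Fin m))
    (P : ℝ → EuclideanSpace ℝ (Fin m))
    (hP : ∀ η : ℝ,
      ((∀ a, 0 ≤ P η a) ∧ ∑ a, P η a = 1) ∧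
      ∀ w : EuclideanSpace ℝ (Fin m), ((∀ a, 0 ≤ w a) ∧ ∑ a, w a = 1) →
        ‖x + η • g - P η‖ ≤ ‖x + η • g - w‖) :
    ∃ z : EuclideanSpace ℝ (Fin m),
      ((∀ a, 0 ≤ z a) ∧ ∑ a, z a = 1) ∧
      Filter.Tendsto P Filter.atTop (nhds z) ∧
      (∀ a, z a ≠ 0 → ∀ b, g b ≤ g a) ∧
      (∀ w : EuclideanSpace ℝ (Fin m), ((∀ a, 0 ≤ w a) ∧ ∑ a, w a = 1) →
        ∑ a, w a * g a ≤ ∑ a, z a * g a) ∧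
      ∃ a₀ : Fin m, (∀ b, g b ≤ g a₀) ∧ ∑ a, z a * g a = g a₀ := by
  have : Nonempty (Fin m) := ⟨⟨0, hm⟩⟩
  obtain ⟨a₀, ha₀⟩ := Finite.exists_max g
  set s := univ.filter fun a => g a = g a₀
  have hs : ∀ a ∈ s, g a = g a₀ := fun a ha => (mem_filter.1 ha).2
  have hsc : ∀ a ∉ s, g a < g a₀ := fun a ha =>
    (ha₀ a).lt_of_ne fun h => ha (mem_filter.2 ⟨mem_univ _, h⟩)
  obtain ⟨c, hc⟩ := exists_sum_max_sub_eq (s := s) ⟨a₀, by simp [s]⟩ x zero_le_one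
  set z := waterFill s x c
  have hz : (∀ a, 0 ≤ z a) ∧ ∑ a, z a = 1 :=
    ⟨waterFill_nonneg s x c, (sum_waterFill s x c).trans hc⟩
  have hz_supp : ∀ a, z a ≠ 0 → g a = g a₀ := fun a ha => hs a (mem_of_waterFill_ne_zero ha)
  have hzg : ∑ a, z a * g a = g a₀ := sum_mul_eq_of_support hz.2 hz_supp
  have hPz : ∀ᶠ η in atTop, P η = z := by
    filter_upwards [eventually_real_inner_sub_waterFill_nonpos x g c (g a₀) hs hsc] with η hη
    obtain ⟨⟨hP_nonneg, hP_sum⟩, hP_min⟩ := hP η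
    exact eq_of_real_inner_sub_sub_nonpos_of_norm_sub_le
      (hη _ hP_nonneg (hP_sum.trans hz.2.symm)) (hP_min z hz)
  refine ⟨z, hz, tendsto_const_nhds.congr' (hPz.mono fun _ h => h.symm),
    fun a ha b => hz_supp a ha ▸ ha₀ b, fun w hw => hzg ▸ sum_mul_le_of_mem_stdSimplex hw ha₀,
    a₀, ha₀, hzg⟩

/-- for `x` in the simplex and any payoff vector `g`, the
Euclidean projections `Π_Δ(x + η g)` converge as `η → ∞` to a point `z` of the
simplex supported on the argmax coordinates of `g` which maximizes the linear
objective `⟨·, g⟩` over the simplex, with `⟨z, g⟩ = max_a g_a`; i.e. the limit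
of the projected infinite-step-size gradient ascent update is a best response
to `g`.  (Here `P η` is required to be the Euclidean projection of `x + η • g`
onto the simplex, which is characterized as the closest point of the simplex.) -/
theorem proj_simplex_tendsto_bestResponse (m : ℕ) (hm : 1 ≤ m)
    (x g : EuclideanSpace ℝ (Fin m))
    (hx : (∀ a, 0 ≤ x a) ∧ ∑ a, x a = 1)
    (P : ℝ → EuclideanSpace ℝ (Fin m))
    (hP : ∀ η : ℝ,
      ((∀ a, 0 ≤ P η a) ∧ ∑ a, P η a = 1) ∧
      ∀ w : EuclideanSpace ℝ (Fin m), ((∀ a, 0 ≤ w a) ∧ ∑ a, w a = 1) →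
        ‖x + η • g - P η‖ ≤ ‖x + η • g - w‖) :
    ∃ z : EuclideanSpace ℝ (Fin m),
      ((∀ a, 0 ≤ z a) ∧ ∑ a, z a = 1) ∧
      Filter.Tendsto P Filter.atTop (nhds z) ∧
      (∀ a, z a ≠ 0 → ∀ b, g b ≤ g a) ∧
      (∀ w : EuclideanSpace ℝ (Fin m), ((∀ a, 0 ≤ w a) ∧ ∑ a, w a = 1) →
        ∑ a, w a * g a ≤ ∑ a, z a * g a) ∧
      ∃ a₀ : Fin m, (∀ b, g b ≤ g a₀) ∧ ∑ a, z a * g a = g a₀ :=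
  proj_simplex_tendsto_bestResponse_general m hm x g P hP
end
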